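/- arXiv:2412.15287 — 2 statements merged into one kernel-verified Lean document; each statement's English description precedes it below -/
import Mathlib

section
/- (BoN-RL, Lemma 2) Let X and Y be finite types, D a pmf on X, θ ↦ π_θ(·|x) a differentiable parameterized family of positive pmfs on Y for each x ∈ X, r : X × Y → ℝ a verifier score, R : X × Y → ℝ an environment reward, and λ > 0. Define Q_θ(x,y) = ∑_{y'} π_θ(y'|x)·𝟙{r(x,y) ≥ r(x,y')}, Z_θ(x) = ∑_y π_θ(y|x)·exp(λ·Q_θ(x,y)), π_bon,θ(y|x) = π_θ(y|x)·exp(λ·Q_θ(x,y))/Z_θ(x), J(θ) = ∑_x D(x)·∑_y π_bon,θ(y|x)·R(x,y), and the baseline b_θ(x) = ∑_y π_bon,θ(y|x)·R(x,y). Then ∇_θ J(θ) = ∑_x D(x)·∑_y π_bon,θ(y|x)·∇_θ log π_θ(y|x)·(R(x,y) − b_θ(x)) − λ·∑_x D(x)·∑_y π_bon,θ(y|x)·∑_{y'} π_θ(y'|x)·∇_θ log π_θ(y'|x)·𝟙{r(x,y) < r(x,y')}·(R(x,y) − b_θ(x)). -/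
/-!
The Best-of-N policy is the self-normalized tilt `π_bon ∝ w := π · exp (λ Q)`. For weights
`w_y` with scores `ℓ_y = ∇ log w_y`, differentiating the normalizer produces the baseline:
`∇ ∑ (w_y / ∑ w) R_y = ∑ (w_y / ∑ w) (R_y - b) ℓ_y` with `b` the current expectation of `R`.
Here `ℓ_y = ∇ log π(y) + λ ∇ Q(y)`, and since `∑ π = 1`, `Q(y) = P(r ≤ r y) = 1 - P(r y < r)`,
so `∇ Q(y) = -∑_{y'} π(y') 𝟙{r y < r y'} ∇ log π(y')`.
-/

open Finset

section

variable {E : Type*} [NormedAddCommGroup E] [NormedSpace ℝ E] {θ : E}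

theorem HasFDerivAt.div_sum {ι : Type*} [Fintype ι] {w : ι → E → ℝ} {ℓ : ι → E →L[ℝ] ℝ}
    (hw : ∀ i, HasFDerivAt (w i) (w i θ • ℓ i) θ) (hZ : ∑ j, w j θ ≠ 0) (i : ι) :
    HasFDerivAt (fun t => w i t / ∑ j, w j t)
      ((w i θ / ∑ j, w j θ) • (ℓ i - ∑ j, (w j θ / ∑ k, w k θ) • ℓ j)) θ := by
  have hsum : HasFDerivAt (fun t => ∑ j, w j t) (∑ j, w j θ • ℓ j) θ :=
    HasFDerivAt.fun_sum fun j _ => hw j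
  simp only [div_eq_mul_inv]
  refine ((hw i).fun_mul ((hasDerivAt_inv hZ).comp_hasFDerivAt θ hsum)).congr_fderiv ?_
  simp only [Function.comp_apply, mul_comm (w _ θ), ← smul_smul, ← smul_sum]
  module

theorem HasFDerivAt.sum_div_sum_mul {ι : Type*} [Fintype ι] {w : ι → E → ℝ}
    {ℓ : ι → E →L[ℝ] ℝ} (hw : ∀ i, HasFDerivAt (w i) (w i θ • ℓ i) θ) (hZ : ∑ j, w j θ ≠ 0)
    (R : ι → ℝ) :
    HasFDerivAt (fun t => ∑ i, w i t / (∑ j, w j t) * R i)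
      (∑ i, (w i θ / (∑ j, w j θ) * (R i - ∑ k, w k θ / (∑ j, w j θ) * R k)) • ℓ i) θ := by
  refine (HasFDerivAt.fun_sum fun i _ => (div_sum hw hZ i).mul_const (R i)).congr_fderiv ?_
  set q := fun i => w i θ / ∑ j, w j θ
  set b := ∑ k, q k * R k
  set m := ∑ j, q j • ℓ j
  calc ∑ i, R i • q i • (ℓ i - m)
      = ∑ i, ((q i * R i) • ℓ i - (q i * R i) • m) := sum_congr rfl fun i _ => by module
    _ = ∑ i, ((q i * R i) • ℓ i - b • q i • ℓ i) := by
      rw [sum_sub_distrib, sum_sub_distrib, ← sum_smul, ← smul_sum]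
    _ = ∑ i, (q i * (R i - b)) • ℓ i := sum_congr rfl fun i _ => by module

theorem DifferentiableAt.hasFDerivAt_smul_fderiv_log {p : E → ℝ} (hp : DifferentiableAt ℝ p θ)
    (h : p θ ≠ 0) : HasFDerivAt p (p θ • fderiv ℝ (fun t => Real.log (p t)) θ) θ := by
  rw [(hp.hasFDerivAt.log h).fderiv, smul_smul, mul_inv_cancel₀ h, one_smul]
  exact hp.hasFDerivAt

theorem HasFDerivAt.mul_exp {p q : E → ℝ} {ℓ q' : E →L[ℝ] ℝ} (hp : HasFDerivAt p (p θ • ℓ) θ)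
    (hq : HasFDerivAt q q' θ) :
    HasFDerivAt (fun t => p t * Real.exp (q t)) ((p θ * Real.exp (q θ)) • (ℓ + q')) θ :=
  (hp.fun_mul hq.exp).congr_fderiv (by module)

variable {Y : Type*} [Fintype Y]

theorem sum_mul_ite_le_eq_one_sub {p : Y → ℝ} (hp : ∑ y, p y = 1) (s : Y → ℝ) (c : ℝ) :
    ∑ y, p y * (if s y ≤ c then 1 else 0) = 1 - ∑ y, p y * (if c < s y then 1 else 0) := by
  rw [eq_sub_iff_add_eq, ← sum_add_distrib]
  refine (sum_congr rfl fun y _ => ?_).trans hp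
  rcases le_or_gt (s y) c with h | h
  · simp [h, h.not_gt]
  · simp [h, h.not_ge]

theorem hasFDerivAt_sum_mul_ite_le {p : E → Y → ℝ} {ℓ : Y → E →L[ℝ] ℝ}
    (hsum : ∀ t, ∑ y, p t y = 1) (hp : ∀ y, HasFDerivAt (fun t => p t y) (p θ y • ℓ y) θ)
    (s : Y → ℝ) (c : ℝ) :
    HasFDerivAt (fun t => ∑ y, p t y * (if s y ≤ c then 1 else 0))
      (-∑ y, (p θ y * if c < s y then 1 else 0) • ℓ y) θ := by
  simp only [sum_mul_ite_le_eq_one_sub (hsum _)]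
  refine ((HasFDerivAt.fun_sum fun y _ => (hp y).mul_const _).const_sub 1).congr_fderiv ?_
  simp only [smul_smul, mul_comm]

theorem hasFDerivAt_mul_exp_sum_mul_ite_le {p : E → Y → ℝ} (hpos : ∀ y, p θ y ≠ 0)
    (hsum : ∀ t, ∑ y, p t y = 1) (hdiff : ∀ y, DifferentiableAt ℝ (fun t => p t y) θ)
    (s : Y → ℝ) (lam : ℝ) (y : Y) :
    HasFDerivAt (fun t => p t y * Real.exp (lam * ∑ y', p t y' * if s y' ≤ s y then 1 else 0))
      ((p θ y * Real.exp (lam * ∑ y', p θ y' * if s y' ≤ s y then 1 else 0)) •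
        (fderiv ℝ (fun t => Real.log (p t y)) θ -
          lam • ∑ y', (p θ y' * if s y < s y' then 1 else 0) •
            fderiv ℝ (fun t => Real.log (p t y')) θ)) θ := by
  have hlog y := (hdiff y).hasFDerivAt_smul_fderiv_log (hpos y)
  refine ((hlog y).mul_exp
    ((hasFDerivAt_sum_mul_ite_le hsum hlog s (s y)).const_mul lam)).congr_fderiv ?_
  rw [smul_neg, sub_eq_add_neg]

end

theorem stmt_7_general {X Y : Type*} [Fintype X] [Fintype Y] {d : ℕ}
    (D : X → ℝ)
    (π : (Fin d → ℝ) → X → Y → ℝ)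
    (hpos : ∀ θ x y, 0 < π θ x y) (hsum : ∀ θ x, ∑ y, π θ x y = 1)
    (hdiff : ∀ x y, Differentiable ℝ (fun θ => π θ x y))
    (r : X → Y → ℝ) (R : X → Y → ℝ)
    (lam : ℝ)
    (Q : (Fin d → ℝ) → X → Y → ℝ)
    (hQ : ∀ θ x y, Q θ x y = ∑ y', π θ x y' * (if r x y' ≤ r x y then (1 : ℝ) else 0))
    (Z : (Fin d → ℝ) → X → ℝ)
    (hZ : ∀ θ x, Z θ x = ∑ y, π θ x y * Real.exp (lam * Q θ x y))
    (πbon : (Fin d → ℝ) → X → Y → ℝ)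
    (hbon : ∀ θ x y, πbon θ x y = π θ x y * Real.exp (lam * Q θ x y) / Z θ x)
    (b : (Fin d → ℝ) → X → ℝ)
    (hb : ∀ θ x, b θ x = ∑ y, πbon θ x y * R x y)
    (θ : Fin d → ℝ) :
    fderiv ℝ (fun t => ∑ x, D x * ∑ y, πbon t x y * R x y) θ
      = (∑ x, D x • ∑ y, (πbon θ x y * (R x y - b θ x)) •
            fderiv ℝ (fun t => Real.log (π t x y)) θ)
        - lam • ∑ x, D x • ∑ y, ∑ y',
            (πbon θ x y * π θ x y' * (if r x y < r x y' then (1 : ℝ) else 0)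
              * (R x y - b θ x)) • fderiv ℝ (fun t => Real.log (π t x y')) θ := by
  have hZpos x : 0 < Z θ x := hZ θ x ▸
    sum_pos (fun y _ => mul_pos (hpos θ x y) (Real.exp_pos _))
      (nonempty_of_sum_ne_zero (f := π θ x) (by simp [hsum]))
  simp only [hb, hbon, hZ, hQ] at hZpos ⊢
  have hprompt x := HasFDerivAt.sum_div_sum_mul
    (hasFDerivAt_mul_exp_sum_mul_ite_le (p := fun t => π t x) (fun y => (hpos θ x y).ne')
      (fun t => hsum t x) (fun y => (hdiff x y).differentiableAt) (r x) lam)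
    (hZpos x).ne' (R x)
  refine (HasFDerivAt.fun_sum fun x _ => (hprompt x).const_mul (D x)).fderiv.trans ?_
  simp only [smul_sub, smul_sum, smul_smul, sum_sub_distrib]
  congr 1
  refine sum_congr rfl fun x _ => sum_congr rfl fun y _ => sum_congr rfl fun y' _ => ?_
  congr 1
  ring

/-- **BoN-RL gradient (Lemma 2).**
With `X, Y` finite, `D` a pmf on `X`, a differentiable family of conditional positive pmfs
`π θ x`, verifier score `r`, environment reward `R`, `λ > 0`,
`Q θ x y = ∑ y', π θ x y' * 𝟙{r x y' ≤ r x y}`, `Z θ x = ∑ y, π θ x y * exp (λ * Q θ x y)`,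
`π_bon θ x y = π θ x y * exp (λ * Q θ x y) / Z θ x`,
`J(θ) = ∑ x, D x * ∑ y, π_bon θ x y * R x y`, and baseline
`b θ x = ∑ y, π_bon θ x y * R x y`, the gradient of `J` equals
`∑ x, D x • ∑ y, (π_bon θ x y * (R x y − b θ x)) • ∇ log π θ x y
  − λ • ∑ x, D x • ∑ y, ∑ y', (π_bon θ x y * π θ x y' * 𝟙{r x y < r x y'} * (R x y − b θ x))
      • ∇ log π θ x y'`. -/
theorem stmt_7 {X Y : Type*} [Fintype X] [Fintype Y] {d : ℕ}
    (D : X → ℝ) (hDnn : ∀ x, 0 ≤ D x) (hDsum : ∑ x, D x = 1)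
    (π : (Fin d → ℝ) → X → Y → ℝ)
    (hpos : ∀ θ x y, 0 < π θ x y) (hsum : ∀ θ x, ∑ y, π θ x y = 1)
    (hdiff : ∀ x y, Differentiable ℝ (fun θ => π θ x y))
    (r : X → Y → ℝ) (R : X → Y → ℝ)
    (lam : ℝ) (hlam : 0 < lam)
    (Q : (Fin d → ℝ) → X → Y → ℝ)
    (hQ : ∀ θ x y, Q θ x y = ∑ y', π θ x y' * (if r x y' ≤ r x y then (1 : ℝ) else 0))
    (Z : (Fin d → ℝ) → X → ℝ)
    (hZ : ∀ θ x, Z θ x = ∑ y, π θ x y * Real.exp (lam * Q θ x y))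
    (πbon : (Fin d → ℝ) → X → Y → ℝ)
    (hbon : ∀ θ x y, πbon θ x y = π θ x y * Real.exp (lam * Q θ x y) / Z θ x)
    (b : (Fin d → ℝ) → X → ℝ)
    (hb : ∀ θ x, b θ x = ∑ y, πbon θ x y * R x y)
    (θ : Fin d → ℝ) :
    fderiv ℝ (fun t => ∑ x, D x * ∑ y, πbon t x y * R x y) θ
      = (∑ x, D x • ∑ y, (πbon θ x y * (R x y - b θ x)) •
            fderiv ℝ (fun t => Real.log (π t x y)) θ)
        - lam • ∑ x, D x • ∑ y, ∑ y',
            (πbon θ x y * π θ x y' * (if r x y < r x y' then (1 : ℝ) else 0)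
              * (R x y - b θ x)) • fderiv ℝ (fun t => Real.log (π t x y')) θ :=
  stmt_7_general D π hpos hsum hdiff r R lam Q hQ Z hZ πbon hbon b hb θ
end

section
/- Let λ_N > 0 be the unique solution of (λ_N − 1)·exp(λ_N + 1)/exp(λ_N − 1) − log((exp(λ_N) − 1)/λ_N) = log N − (N − 1)/N for real N ≥ 1. Then λ_N scales sub-linearly with N: λ_N ≤ (log N − 1 + 1/N + e²)/(e² − 1) for all N ≥ 1, and in particular λ_N / N → 0 as N → ∞. -/
/-!
Since `exp (λ + 1) / exp (λ - 1) = e²` and `log ((exp λ - 1) / λ) ≤ λ`, the left-hand side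
`bonH λ` is bounded below by the line `(λ - 1) e² - λ` of slope `e² - 1 > 0`. Inverting this
line bounds `λ_N` by `O(log N)`, which is `o(N)`.
-/

/-- The left-hand side of the defining equation of the Best-of-N variational
coefficient `λ_N`: `h(λ) = (λ − 1)·exp(λ + 1)/exp(λ − 1) − log((exp λ − 1)/λ)`. -/
noncomputable def bonH (l : ℝ) : ℝ :=
  (l - 1) * Real.exp (l + 1) / Real.exp (l - 1) - Real.log ((Real.exp l - 1) / l)

open Real Filter Topology

/-- After clearing the logarithm this is `1 - λ ≤ e^{-λ}`. -/
theorem log_exp_sub_one_div_le {l : ℝ} (hl : 0 < l) : log ((exp l - 1) / l) ≤ l := by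
  have hpos : 0 < (exp l - 1) / l := div_pos (by linarith [add_one_lt_exp hl.ne']) hl
  rw [log_le_iff_le_exp hpos, div_le_iff₀ hl]
  have h : (-l + 1) * exp l ≤ 1 := by
    simpa [← exp_add] using mul_le_mul_of_nonneg_right (add_one_le_exp (-l)) (exp_pos l).le
  nlinarith

theorem bonH_eq (l : ℝ) : bonH l = (l - 1) * exp 2 - log ((exp l - 1) / l) := by
  rw [bonH, show l + 1 = (l - 1) + 2 by ring, exp_add]
  field_simp

theorem bonH_ge {l : ℝ} (hl : 0 < l) : (l - 1) * exp 2 - l ≤ bonH l := by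
  rw [bonH_eq]
  linarith [log_exp_sub_one_div_le hl]

theorem le_of_bonH_eq {N l : ℝ} (hN : N ≠ 0) (hl : 0 < l)
    (h : bonH l = log N - (N - 1) / N) :
    l ≤ (log N - 1 + 1 / N + exp 2) / (exp 2 - 1) := by
  have he2 : 1 < exp 2 := one_lt_exp_iff.mpr two_pos
  have hsub : (N - 1) / N = 1 - 1 / N := by field_simp
  rw [le_div_iff₀ (by linarith)]
  linarith [bonH_ge hl]

theorem tendsto_log_add_const_add_inv_div_atTop (c : ℝ) :
    Tendsto (fun N => (log N + c + 1 / N) / N) atTop (𝓝 0) := by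
  have hlog : Tendsto (fun N => log N / N) atTop (𝓝 0) :=
    isLittleO_log_id_atTop.tendsto_div_nhds_zero
  have hinv : Tendsto (fun N : ℝ => N⁻¹) atTop (𝓝 0) := tendsto_inv_atTop_zero
  have hsum := (hlog.add (hinv.const_mul c)).add (hinv.mul hinv)
  simp only [mul_zero, add_zero] at hsum
  refine hsum.congr' ?_
  filter_upwards [eventually_ne_atTop 0] with N hN
  field_simp

/-- **Sub-linear scaling of the BoN variational coefficient `λ_N`.**
If for real `N ≥ 1`, `λ_N > 0` solves `h(λ_N) = log N − (N − 1)/N`, then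
`λ_N ≤ (log N − 1 + 1/N + e²)/(e² − 1)`, and for any assignment `N ↦ λ_N` of positive
solutions we have `λ_N / N → 0` as `N → ∞`. -/
theorem stmt_14 :
    (∀ N l : ℝ, 1 ≤ N → 0 < l →
      bonH l = Real.log N - (N - 1) / N →
      l ≤ (Real.log N - 1 + 1 / N + Real.exp 2) / (Real.exp 2 - 1)) ∧
    (∀ lam : ℝ → ℝ,
      (∀ N : ℝ, 1 ≤ N →
        0 < lam N ∧ bonH (lam N) = Real.log N - (N - 1) / N) →
      Filter.Tendsto (fun N => lam N / N) Filter.atTop (nhds 0)) := by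
  refine ⟨fun N l hN => le_of_bonH_eq (zero_lt_one.trans_le hN).ne', fun lam hlam => ?_⟩
  have hbound : Tendsto (fun N => (log N + (exp 2 - 1) + 1 / N) / N / (exp 2 - 1))
      atTop (𝓝 0) := by
    simpa using (tendsto_log_add_const_add_inv_div_atTop (exp 2 - 1)).div_const (exp 2 - 1)
  refine squeeze_zero' ?_ ?_ hbound
  · filter_upwards [eventually_ge_atTop 1] with N hN
    exact div_nonneg (hlam N hN).1.le (by linarith)
  · filter_upwards [eventually_ge_atTop 1] with N hN
    rw [div_right_comm]
    gcongr
    exact (le_of_bonH_eq (zero_lt_one.trans_le hN).ne' (hlam N hN).1 (hlam N hN).2).trans_eq (by ring)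
end
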